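/- arXiv:0907.1540 — 2 statements merged into one kernel-verified Lean document; each statement's English description precedes it below -/
import Mathlib

section
/- Let Q be an n×n matrix such that: q_{ij} ∈ {0,1} for all i > 1; q_{ij} = 1 whenever i = j+1; q_{ij} = 0 whenever i > j+1; and q_{1j} = Q₁/Q_j for 1 ≤ j ≤ n, where Q₁,…,Qₙ are irreducible, pairwise coprime polynomials of positive degree with positive variables. Then det(Q) is a nonzero rational function. -/
/-!
Expanding along the first row, `det M = Q₀ · ∑ⱼ ± cⱼ / Qⱼ`, where each cofactor `cⱼ` is the
determinant of a `0/1` matrix, hence a polynomial, and the last cofactor is `1` because its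
minor is unitriangular. If the sum vanished, clearing denominators would make `Q_{n-1}` divide
`± ∏_{k ≠ n-1} Q_k`, which is coprime to it, so `Q_{n-1}` would be a unit.
-/

open Finset

theorem Matrix.det_mem_range_of_forall_mem_range {R S n : Type*} [CommRing R] [CommRing S]
    [Fintype n] [DecidableEq n] (f : R →+* S) {A : Matrix n n S}
    (hA : ∀ i j, A i j ∈ f.range) : A.det ∈ f.range := by
  choose B hB using hA
  exact ⟨(Matrix.of B).det, by rw [RingHom.map_det]; congr; ext i j; exact hB i j⟩

theorem Matrix.det_submatrix_succ_castSucc_eq_one {R : Type*} [CommRing R] {m : ℕ}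
    {M : Matrix (Fin (m + 1)) (Fin (m + 1)) R}
    (hsub : ∀ i j : Fin (m + 1), i.val = j.val + 1 → M i j = 1)
    (hlow : ∀ i j : Fin (m + 1), j.val + 1 < i.val → M i j = 0) :
    (M.submatrix Fin.succ Fin.castSucc).det = 1 := by
  have htri : (M.submatrix Fin.succ Fin.castSucc).BlockTriangular id := fun i j hij =>
    hlow _ _ (by simpa using hij)
  rw [Matrix.det_of_isUpperTriangular htri]
  exact prod_eq_one fun i _ => hsub _ _ rfl

theorem isUnit_of_sum_mul_prod_erase_eq_zero {R ι : Type*} [CommRing R] [Fintype ι]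
    [DecidableEq ι] {q c : ι → R} {i : ι} (hcop : ∀ j ≠ i, IsCoprime (q i) (q j))
    (hci : IsUnit (c i)) (hsum : ∑ j, c j * ∏ k ∈ univ.erase j, q k = 0) : IsUnit (q i) := by
  have hrest : q i ∣ ∑ j ∈ univ.erase i, c j * ∏ k ∈ univ.erase j, q k :=
    dvd_sum fun j hj => (dvd_prod_of_mem _ (mem_erase.2 ⟨(ne_of_mem_erase hj).symm,
      mem_univ _⟩)).mul_left _
  have hi : q i ∣ c i * ∏ k ∈ univ.erase i, q k := by
    rw [← add_sum_erase _ _ (mem_univ i), add_eq_zero_iff_eq_neg] at hsum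
    exact hsum ▸ hrest.neg_right
  have hprod : IsCoprime (q i) (∏ k ∈ univ.erase i, q k) :=
    IsCoprime.prod_right fun k hk => hcop k (ne_of_mem_erase hk)
  exact isUnit_of_dvd_unit (hprod.dvd_of_dvd_mul_right hi) hci

theorem sum_algebraMap_div_ne_zero {R K ι : Type*} [CommRing R] [Field K] [Algebra R K]
    [IsFractionRing R K] [Fintype ι] [DecidableEq ι] {q c : ι → R} {i : ι}
    (hq : ∀ j, q j ≠ 0) (hcop : ∀ j ≠ i, IsCoprime (q i) (q j)) (hqi : ¬IsUnit (q i))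
    (hci : IsUnit (c i)) : ∑ j, algebraMap R K (c j) / algebraMap R K (q j) ≠ 0 := by
  have hinj := IsFractionRing.injective R K
  have hfq : ∀ j, algebraMap R K (q j) ≠ 0 := fun j =>
    (map_ne_zero_iff _ hinj).2 (hq j)
  refine fun hsum => hqi (isUnit_of_sum_mul_prod_erase_eq_zero hcop hci (hinj ?_))
  calc algebraMap R K (∑ j, c j * ∏ k ∈ univ.erase j, q k)
      = (∑ j, algebraMap R K (c j) / algebraMap R K (q j)) * algebraMap R K (∏ k, q k) := by
        simp only [map_sum, map_mul, map_prod, sum_mul]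
        refine sum_congr rfl fun j _ => ?_
        rw [← mul_prod_erase _ _ (mem_univ j)]
        field_simp [hfq j]
    _ = algebraMap R K 0 := by rw [hsum, zero_mul, map_zero]

theorem det_almost_triangular_ne_zero_general
    {σ : Type} (n : ℕ) (hn : 0 < n)
    (Q : Fin n → MvPolynomial σ ℝ)
    (hirr : ∀ i, Irreducible (Q i))
    (hcop : ∀ i j, i ≠ j → IsCoprime (Q i) (Q j))
    (M : Matrix (Fin n) (Fin n) (FractionRing (MvPolynomial σ ℝ)))
    (h01 : ∀ i j : Fin n, 0 < i.val → M i j = 0 ∨ M i j = 1)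
    (hsub : ∀ i j : Fin n, i.val = j.val + 1 → M i j = 1)
    (hlow : ∀ i j : Fin n, j.val + 1 < i.val → M i j = 0)
    (hrow : ∀ j : Fin n, M ⟨0, hn⟩ j =
        algebraMap (MvPolynomial σ ℝ) (FractionRing (MvPolynomial σ ℝ)) (Q ⟨0, hn⟩) /
        algebraMap (MvPolynomial σ ℝ) (FractionRing (MvPolynomial σ ℝ)) (Q j)) :
    M.det ≠ 0 := by
  obtain ⟨m, rfl⟩ : ∃ m, n = m + 1 := ⟨n - 1, by omega⟩
  set f := algebraMap (MvPolynomial σ ℝ) (FractionRing (MvPolynomial σ ℝ))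
  have hrow0 : ∀ j, M 0 j = f (Q 0) / f (Q j) := hrow
  have hminor (j : Fin (m + 1)) : (M.submatrix Fin.succ j.succAbove).det ∈ f.range :=
    Matrix.det_mem_range_of_forall_mem_range f fun i k => by
      rcases h01 i.succ (j.succAbove k) i.succ_pos with h | h <;> simp [h]
  choose c hc using hminor
  have hlast : c (Fin.last m) = 1 := IsFractionRing.injective _ (FractionRing _) <| by
    rw [hc, map_one, Fin.succAbove_last, Matrix.det_submatrix_succ_castSucc_eq_one hsub hlow]
  have hdet : M.det = f (Q 0) * ∑ j : Fin (m + 1), f ((-1) ^ (j : ℕ) * c j) / f (Q j) := by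
    rw [Matrix.det_succ_row_zero, mul_sum]
    refine sum_congr rfl fun j _ => ?_
    rw [← hc, hrow0]
    simp only [map_mul, map_pow, map_neg, map_one]
    ring
  rw [hdet]
  refine mul_ne_zero ((map_ne_zero_iff _ (IsFractionRing.injective _ _)).2 (hirr 0).ne_zero) ?_
  exact sum_algebraMap_div_ne_zero (i := Fin.last m) (fun j => (hirr j).ne_zero)
    (fun j hj => hcop _ _ hj.symm) (hirr _).not_isUnit
    (by simpa [hlast] using isUnit_neg_one.pow m)

/-- Determinant lemma for almost-triangular matrices over the field of rational
functions: if `M i j ∈ {0,1}` for `i > 0`, `M i j = 1` on the subdiagonal,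
`M i j = 0` below the subdiagonal, and the first row is `Q 0 / Q j` where the
`Q j` are irreducible, pairwise coprime polynomials of positive degree, then
`det M` is a nonzero rational function. -/
theorem det_almost_triangular_ne_zero
    {σ : Type} (n : ℕ) (hn : 0 < n)
    (Q : Fin n → MvPolynomial σ ℝ)
    (hirr : ∀ i, Irreducible (Q i))
    (hcop : ∀ i j, i ≠ j → IsCoprime (Q i) (Q j))
    (hdeg : ∀ i, 0 < (Q i).totalDegree)
    (M : Matrix (Fin n) (Fin n) (FractionRing (MvPolynomial σ ℝ)))
    (h01 : ∀ i j : Fin n, 0 < i.val → M i j = 0 ∨ M i j = 1)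
    (hsub : ∀ i j : Fin n, i.val = j.val + 1 → M i j = 1)
    (hlow : ∀ i j : Fin n, j.val + 1 < i.val → M i j = 0)
    (hrow : ∀ j : Fin n, M ⟨0, hn⟩ j =
        algebraMap (MvPolynomial σ ℝ) (FractionRing (MvPolynomial σ ℝ)) (Q ⟨0, hn⟩) /
        algebraMap (MvPolynomial σ ℝ) (FractionRing (MvPolynomial σ ℝ)) (Q j)) :
    M.det ≠ 0 :=
  det_almost_triangular_ne_zero_general n hn Q hirr hcop M h01 hsub hlow hrow
end

section
/- If two processes s and t are probabilistically ready trace equivalent (s ≈_O t), then they are testing equivalent (s ≈_T t): Res(s,T) = Res(t,T) for every test T. -/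
inductive Proc (A : Type) where
  | nd : List (A × Proc A) → Proc A
  | pr : List (ℝ × Proc A) → Proc A

namespace Proc

variable {A : Type} [DecidableEq A]

/-- The menu of a nondeterministic state: the set of initially enabled actions. -/
def menu : Proc A → Finset A
  | nd l => (l.map Prod.fst).toFinset
  | pr _ => ∅

/-- Deterministic action transition. -/
def step : Proc A → A → Option (Proc A)
  | nd l, a => (l.find? (fun x => x.1 = a)).map Prod.snd
  | pr _, _ => none

/-- P¹ₛ(M) : the probability that the initial menu observed is M. -/
noncomputable def P1 : Proc A → Finset A → ℝ
  | nd l, M => if (l.map Prod.fst).toFinset = M then 1 else 0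
  | pr l, M => (l.attach.map (fun x => x.1.1 * P1 x.1.2 M)).sum
termination_by p _ => sizeOf p
decreasing_by
  obtain ⟨⟨r, p⟩, hmem⟩ := x
  have h := List.sizeOf_lt_of_mem hmem
  simp at h ⊢
  omega

end Proc
/-- Flattening used when a probabilistic transition would lead to a probabilistic state. -/
def flat {A : Type} (w : ℝ) : Proc A → List (ℝ × Proc A)
  | Proc.pr l => l.map (fun x => (w * x.1, x.2))
  | q => [(w, q)]

namespace Proc

variable {A : Type} [DecidableEq A]

/-- The derived process s_{(M,a)} : the process that `s` becomes, given that the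
menu `M` was offered and the action `a ∈ M` was performed. -/
noncomputable def after : Proc A → Finset A → A → Option (Proc A)
  | nd l, M, a => if (l.map Prod.fst).toFinset = M then step (nd l) a else none
  | pr l, M, a =>
      let sel := l.filter (fun x => x.2.menu = M)
      let tot := (sel.map Prod.fst).sum
      let entries := sel.flatMap (fun x =>
        match x.2.step a with
        | none => []
        | some q => flat (x.1 / tot) q)
      if entries.isEmpty then none else some (pr entries)

/-- The conditional ready-trace probability
`P_sⁿ(M | M₁,a₁,…,a_{n-1})`, where `none` represents undefinedness. -/
noncomputable def Pn : Proc A → List (Finset A × A) → Finset A → Option ℝ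
  | s, [], M => some (P1 s M)
  | s, Ma :: rest, M =>
      if 0 < P1 s Ma.1 then (after s Ma.1 Ma.2).bind (fun s' => Pn s' rest M)
      else none

/-- Probabilistic ready trace equivalence `≈_O`. -/
noncomputable def RTEquiv (s t : Proc A) : Prop :=
  ∀ (tr : List (Finset A × A)) (M : Finset A), Pn s tr M = Pn t tr M

/-- Well-formed process graphs: action-deterministic menus, probabilities in (0,1]
summing to one, and probabilistic transitions leading to nondeterministic states. -/
inductive WF : Proc A → Prop
  | nd (l : List (A × Proc A)) :
      (l.map Prod.fst).Nodup → (∀ x ∈ l, WF x.2) → WF (.nd l)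
  | pr (l : List (ℝ × Proc A)) :
      (∀ x ∈ l, 0 < x.1 ∧ x.1 ≤ 1 ∧ ∃ l', x.2 = Proc.nd l') →
      (l.map Prod.fst).sum = 1 →
      (∀ x ∈ l, WF x.2) → WF (.pr l)

end Proc
/-- The field of rational functions whose argument names are the action labels. -/
abbrev RF (A : Type) := FractionRing (MvPolynomial A ℝ)

/-- The rational function consisting of the single variable named by action `a`. -/
noncomputable def RVar {A : Type} (a : A) : RF A :=
  algebraMap (MvPolynomial A ℝ) (RF A) (MvPolynomial.X a)

namespace Proc

variable {A : Type} [DecidableEq A]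

/-- A state can immediately report success. -/
def hasOmega (ω : A) : Proc A → Prop
  | nd l => ω ∈ l.map Prod.fst
  | pr _ => False

/-- `ResRel ω s T r` : the result of testing process `s` with test `T` is the
rational function `r` (ω is the success action of tests). -/
inductive ResRel (ω : A) : Proc A → Proc A → RF A → Prop
  | success (s : Proc A) (l : List (A × Proc A)) (h : ω ∈ l.map Prod.fst) :
      ResRel ω s (.nd l) 1
  | probL (l : List (ℝ × Proc A)) (T : Proc A) (r : ℝ × Proc A → RF A)
      (hT : ¬ hasOmega ω T)
      (h : ∀ x ∈ l, ResRel ω x.2 T (r x)) :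
      ResRel ω (.pr l) T ((l.map (fun x => algebraMap ℝ (RF A) x.1 * r x)).sum)
  | probR (l : List (A × Proc A)) (l' : List (ℝ × Proc A)) (r : ℝ × Proc A → RF A)
      (h : ∀ x ∈ l', ResRel ω (.nd l) x.2 (r x)) :
      ResRel ω (.nd l) (.pr l') ((l'.map (fun x => algebraMap ℝ (RF A) x.1 * r x)).sum)
  | sync (l l' : List (A × Proc A)) (r : A → RF A)
      (hω : ω ∉ l'.map Prod.fst)
      (h : ∀ a ∈ (l.map Prod.fst).toFinset ∩ (l'.map Prod.fst).toFinset,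
        ∀ sa Ta, Proc.step (.nd l) a = some sa → Proc.step (.nd l') a = some Ta →
          ResRel ω sa Ta (r a)) :
      ResRel ω (.nd l) (.nd l')
        (∑ a ∈ (l.map Prod.fst).toFinset ∩ (l'.map Prod.fst).toFinset,
          (RVar a / ∑ b ∈ (l.map Prod.fst).toFinset ∩ (l'.map Prod.fst).toFinset, RVar b) * r a)

/-- Testing equivalence `≈_T` : equal testing results for every test. -/
def TestEquiv (ω : A) (s t : Proc A) : Prop :=
  ∀ T : Proc A, WF T → ∀ r : RF A, (ResRel ω s T r ↔ ResRel ω t T r)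

/-- Processes (as opposed to tests) never perform the success action ω. -/
inductive NoOmega (ω : A) : Proc A → Prop
  | nd (l : List (A × Proc A)) :
      ω ∉ l.map Prod.fst → (∀ x ∈ l, NoOmega ω x.2) → NoOmega ω (.nd l)
  | pr (l : List (ℝ × Proc A)) :
      (∀ x ∈ l, NoOmega ω x.2) → NoOmega ω (.pr l)

/-- Processes with no probabilistic transitions at all. -/
inductive NoProb : Proc A → Prop
  | nd (l : List (A × Proc A)) : (∀ x ∈ l, NoProb x.2) → NoProb (.nd l)

end Proc

/-!
`ResRel` is total and functional, so testing results form a function `res`. A probabilistic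
choice of the test and a probabilistic choice of the process are both averaged linearly, so the
two averages commute. When the test synchronises on its menu `K`, the law of total probability
over the menu `M` offered by `s` gives
`Res(s, T) = Σ_M P¹ₛ(M) · Σ_{a ∈ M ∩ K} (a / Σ_{b ∈ M ∩ K} b) · Res(s_{(M,a)}, T_a)`.
The weights `P¹ₛ(M)` and the derived processes `s_{(M,a)}` are exactly the data compared by ready
trace equivalence, which passes from `s, t` to `s_{(M,a)}, t_{(M,a)}`, so induction on the test
gives `Res(s, T) = Res(t, T)`.
-/

namespace Proc

section Expect

variable {α R : Type*} [CommSemiring R] [Algebra ℝ R]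

noncomputable def expect (l : List (ℝ × α)) (f : α → R) : R :=
  (l.map fun x => algebraMap ℝ R x.1 * f x.2).sum

@[simp] theorem expect_nil (f : α → R) : expect [] f = 0 := rfl

@[simp] theorem expect_cons (x : ℝ × α) (l : List (ℝ × α)) (f : α → R) :
    expect (x :: l) f = algebraMap ℝ R x.1 * f x.2 + expect l f := rfl

theorem expect_congr {l : List (ℝ × α)} {f g : α → R} (h : ∀ x ∈ l, f x.2 = g x.2) :
    expect l f = expect l g :=
  congrArg List.sum (List.map_congr_left fun x hx => by rw [h x hx])

theorem expect_add (l : List (ℝ × α)) (f g : α → R) :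
    expect l (fun p => f p + g p) = expect l f + expect l g := by
  induction l with
  | nil => simp
  | cons x l ih => simp only [expect_cons, ih, mul_add]; abel

theorem expect_mul_left (l : List (ℝ × α)) (c : R) (f : α → R) :
    expect l (fun p => c * f p) = c * expect l f := by
  induction l with
  | nil => simp
  | cons x l ih => simp only [expect_cons, ih, mul_add, mul_left_comm]

theorem expect_const {l : List (ℝ × α)} (hl : (l.map Prod.fst).sum = 1) (c : R) :
    expect l (fun _ => c) = c := by
  have key : ∀ l : List (ℝ × α),
      expect l (fun _ => c) = algebraMap ℝ R (l.map Prod.fst).sum * c := by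
    intro l
    induction l with
    | nil => simp
    | cons x l ih => simp [ih, add_mul]
  rw [key, hl, map_one, one_mul]

theorem expect_comm {β : Type*} (l : List (ℝ × α)) (l' : List (ℝ × β)) (f : α → β → R) :
    expect l (fun p => expect l' (f p)) = expect l' (fun q => expect l (f · q)) := by
  induction l with
  | nil => simp [expect]
  | cons x l ih => simp only [expect_cons, ih, expect_add, expect_mul_left]

theorem expect_finset_sum {ι : Type*} (l : List (ℝ × α)) (S : Finset ι) (f : ι → α → R) :
    expect l (fun p => ∑ i ∈ S, f i p) = ∑ i ∈ S, expect l (f i) := by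
  induction l with
  | nil => simp
  | cons x l ih => simp only [expect_cons, ih, Finset.mul_sum, Finset.sum_add_distrib]

theorem expect_flatMap {β : Type*} (l : List β) (g : β → List (ℝ × α)) (f : α → R) :
    expect (l.flatMap g) f = (l.map fun x => expect (g x) f).sum := by
  induction l with
  | nil => simp
  | cons x l ih =>
    simp only [List.flatMap_cons, List.map_cons, List.sum_cons, ← ih]
    simp [expect]

theorem expect_scale (l : List (ℝ × α)) (c : ℝ) (f : α → R) :
    expect (l.map fun x => (c * x.1, x.2)) f = algebraMap ℝ R c * expect l f := by
  induction l with
  | nil => simp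
  | cons x l ih => simp [ih, mul_add, mul_assoc]

theorem expect_filter {β : Type*} [DecidableEq β] (l : List (ℝ × α)) (m : α → β) (b : β)
    (f : α → R) :
    expect (l.filter fun x => m x.2 = b) f = expect l (fun p => if m p = b then f p else 0) := by
  induction l with
  | nil => simp
  | cons x l ih => by_cases hx : m x.2 = b <;> simp [hx, ih]

theorem expect_eq_sum_filter {β : Type*} [DecidableEq β] {l : List (ℝ × α)} {m : α → β}
    {S : Finset β} (hS : ∀ x ∈ l, m x.2 ∈ S) (f : α → R) :
    expect l f = ∑ b ∈ S, expect (l.filter fun x => m x.2 = b) f := by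
  simp only [expect_filter, ← expect_finset_sum]
  exact expect_congr fun x hx => by simp [hS x hx]

end Expect

variable {A : Type}

theorem sizeOf_lt_nd {l : List (A × Proc A)} {x : A × Proc A} (hx : x ∈ l) :
    sizeOf x.2 < sizeOf (nd l) := by
  have := List.sizeOf_lt_of_mem hx
  obtain ⟨a, p⟩ := x
  simp at this ⊢
  omega

theorem sizeOf_lt_pr {l : List (ℝ × Proc A)} {x : ℝ × Proc A} (hx : x ∈ l) :
    sizeOf x.2 < sizeOf (pr l) := by
  have := List.sizeOf_lt_of_mem hx
  obtain ⟨w, p⟩ := x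
  simp at this ⊢
  omega

theorem WF.sum_eq_one {l : List (ℝ × Proc A)} (h : WF (.pr l)) : (l.map Prod.fst).sum = 1 := by
  cases h with | pr _ _ hsum _ => exact hsum

theorem WF.of_mem_pr {l : List (ℝ × Proc A)} (h : WF (.pr l)) {x : ℝ × Proc A} (hx : x ∈ l) :
    0 < x.1 ∧ (∃ l', x.2 = .nd l') ∧ WF x.2 := by
  cases h with | pr _ hbr _ hchild => exact ⟨(hbr x hx).1, (hbr x hx).2.2, hchild x hx⟩

theorem WF.pr_of_pos {l : List (ℝ × Proc A)} (hl : ∀ x ∈ l, 0 < x.1 ∧ (∃ l', x.2 = .nd l') ∧ WF x.2)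
    (hsum : (l.map Prod.fst).sum = 1) : WF (.pr l) := by
  have hle : ∀ x ∈ l, x.1 ≤ 1 := fun x hx =>
    hsum ▸ List.single_le_sum (fun _ hw => by
      obtain ⟨y, hy, rfl⟩ := List.mem_map.mp hw
      exact (hl y hy).1.le) _ (List.mem_map_of_mem hx)
  exact .pr l (fun x hx => ⟨(hl x hx).1, hle x hx, (hl x hx).2.1⟩) hsum fun x hx => (hl x hx).2.2

theorem sum_fst_flat {q : Proc A} (hq : WF q) (c : ℝ) : ((flat c q).map Prod.fst).sum = c := by
  cases q with
  | nd l => simp [flat]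
  | pr l =>
    simp only [flat, List.map_map, Function.comp_def]
    rw [List.sum_map_mul_left l Prod.fst c, hq.sum_eq_one, mul_one]

theorem WF.of_mem_flat {q : Proc A} (hq : WF q) {c : ℝ} (hc : 0 < c) {e : ℝ × Proc A}
    (he : e ∈ flat c q) : 0 < e.1 ∧ (∃ l', e.2 = .nd l') ∧ WF e.2 := by
  cases q with
  | nd l =>
    obtain rfl : e = (c, .nd l) := by simpa [flat] using he
    exact ⟨hc, ⟨l, rfl⟩, hq⟩
  | pr l =>
    obtain ⟨y, hy, rfl⟩ := List.mem_map.mp he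
    obtain ⟨hpos, hnd, hwf⟩ := hq.of_mem_pr hy
    exact ⟨mul_pos hc hpos, hnd, hwf⟩

/-- Synchronisation on the common menu `K`: action `a` is taken with the symbolic probability
`a / Σ_{b ∈ K} b`. -/
noncomputable def syncRes (K : Finset A) (f : A → RF A) : RF A :=
  ∑ a ∈ K, (RVar a / ∑ b ∈ K, RVar b) * f a

theorem syncRes_congr {K : Finset A} {f g : A → RF A} (h : ∀ a ∈ K, f a = g a) :
    syncRes K f = syncRes K g :=
  Finset.sum_congr rfl fun a ha => by rw [h a ha]

theorem mul_syncRes (c : RF A) (K : Finset A) (f : A → RF A) :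
    c * syncRes K f = syncRes K (fun a => c * f a) := by
  simp only [syncRes, Finset.mul_sum, mul_left_comm]

theorem expect_syncRes {α : Type*} (l : List (ℝ × α)) (K : Finset A) (f : α → A → RF A) :
    expect l (fun p => syncRes K (f p)) = syncRes K (fun a => expect l (f · a)) := by
  simp only [syncRes, expect_finset_sum, expect_mul_left]

variable [DecidableEq A] {ω : A}

theorem exists_mem_of_step_eq_some {l : List (A × Proc A)} {a : A} {q : Proc A}
    (h : (nd l).step a = some q) : ∃ x ∈ l, x.1 = a ∧ x.2 = q := by
  simp only [step, Option.map_eq_some_iff] at h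
  obtain ⟨x, hx, rfl⟩ := h
  exact ⟨x, List.mem_of_find?_eq_some hx, by simpa using List.find?_some hx, rfl⟩

theorem sizeOf_lt_of_step_eq_some {s q : Proc A} {a : A} (h : s.step a = some q) :
    sizeOf q < sizeOf s := by
  cases s with
  | nd l =>
    obtain ⟨x, hx, -, rfl⟩ := exists_mem_of_step_eq_some h
    exact sizeOf_lt_nd hx
  | pr l => simp [step] at h

theorem exists_step_eq_some {s : Proc A} {a : A} (h : a ∈ s.menu) :
    ∃ q, s.step a = some q := by
  cases s with
  | nd l =>
    obtain ⟨x, hx, rfl⟩ := List.mem_map.mp (List.mem_toFinset.mp h)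
    obtain ⟨y, hy⟩ := Option.isSome_iff_exists.mp
      (List.find?_isSome.mpr ⟨x, hx, by simp⟩ : (l.find? fun y => y.1 = x.1).isSome)
    exact ⟨y.2, by simp [step, hy]⟩
  | pr l => simp [menu] at h

theorem WF.step {s q : Proc A} {a : A} (h : WF s) (hq : s.step a = some q) : WF q := by
  cases h with
  | nd l _ hchild =>
    obtain ⟨x, hx, -, rfl⟩ := exists_mem_of_step_eq_some hq
    exact hchild x hx
  | pr l => simp [Proc.step] at hq

theorem P1_nd (l : List (A × Proc A)) (M : Finset A) :
    P1 (nd l) M = if (nd l).menu = M then 1 else 0 := by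
  rw [P1]; rfl

theorem P1_pr (l : List (ℝ × Proc A)) (M : Finset A) :
    P1 (pr l) M = (l.map fun x => x.1 * P1 x.2 M).sum := by
  rw [P1]
  exact congrArg List.sum (List.attach_map_val (f := fun x : ℝ × Proc A => x.1 * P1 x.2 M))

theorem P1_pr_eq_sum_filter {l : List (ℝ × Proc A)} (hl : WF (pr l)) (M : Finset A) :
    P1 (pr l) M = ((l.filter fun x => x.2.menu = M).map Prod.fst).sum := by
  have hbr : ∀ x ∈ l, x.1 * P1 x.2 M = if x.2.menu = M then x.1 else 0 := by
    intro x hx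
    obtain ⟨l', hx'⟩ := (hl.of_mem_pr hx).2.1
    rw [hx', P1_nd]
    split_ifs <;> simp
  rw [P1_pr, List.map_congr_left hbr, List.sum_map_ite]
  simp [List.map_const']

theorem P1_nonneg {s : Proc A} (hs : WF s) (M : Finset A) : 0 ≤ P1 s M := by
  cases s with
  | nd l => rw [P1_nd]; split_ifs <;> norm_num
  | pr l =>
    rw [P1_pr_eq_sum_filter hs]
    refine List.sum_nonneg fun w hw => ?_
    obtain ⟨x, hx, rfl⟩ := List.mem_map.mp hw
    exact (hs.of_mem_pr (List.mem_of_mem_filter hx)).1.le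

theorem filter_eq_nil_of_P1_eq_zero {l : List (ℝ × Proc A)} (hl : WF (pr l)) {M : Finset A}
    (h0 : P1 (pr l) M = 0) : l.filter (fun x => x.2.menu = M) = [] := by
  by_contra hne
  refine (List.sum_pos _ (fun w hw => ?_) (by simpa using hne)).ne' (P1_pr_eq_sum_filter hl M ▸ h0)
  obtain ⟨x, hx, rfl⟩ := List.mem_map.mp hw
  exact (hl.of_mem_pr (List.mem_of_mem_filter hx)).1

theorem RTEquiv.P1_eq {s t : Proc A} (h : RTEquiv s t) (M : Finset A) : P1 s M = P1 t M := by
  simpa [Pn] using h [] M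

theorem RTEquiv.after {s t s' t' : Proc A} (h : RTEquiv s t) {M : Finset A} {a : A}
    (hpos : 0 < P1 s M) (hs : after s M a = some s') (ht : after t M a = some t') :
    RTEquiv s' t' := by
  intro tr M'
  have := h ((M, a) :: tr) M'
  rwa [Pn, Pn, if_pos hpos, if_pos (h.P1_eq M ▸ hpos), hs, ht] at this

theorem ResRel.exists_res (ω : A) (s T : Proc A) : ∃ r, ResRel ω s T r := by
  by_cases hT : hasOmega ω T
  · obtain ⟨l', rfl⟩ : ∃ l', T = nd l' := by
      cases T with
      | nd l' => exact ⟨l', rfl⟩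
      | pr l' => exact hT.elim
    exact ⟨1, .success s l' hT⟩
  match s, T with
  | pr l, T =>
    have hres : ∀ x ∈ l, ∃ r, ResRel ω x.2 T r := fun x _ => exists_res ω x.2 T
    choose! r hr using hres
    exact ⟨_, .probL l T r hT hr⟩
  | nd l, pr l' =>
    have hres : ∀ y ∈ l', ∃ r, ResRel ω (nd l) y.2 r := fun y _ => exists_res ω (nd l) y.2
    choose! r hr using hres
    exact ⟨_, .probR l l' r hr⟩
  | nd l, nd l' =>
    have hres : ∀ a, ∃ r, ∀ sa Ta, (nd l).step a = some sa → (nd l').step a = some Ta →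
        ResRel ω sa Ta r := by
      intro a
      cases hsa : (nd l).step a with
      | none => exact ⟨0, by simp⟩
      | some sa =>
        cases hTa : (nd l').step a with
        | none => exact ⟨0, by simp⟩
        | some Ta =>
          obtain ⟨r, hr⟩ := exists_res ω sa Ta
          exact ⟨r, by simpa using hr⟩
    choose r hr using hres
    exact ⟨_, .sync l l' r hT fun a _ => hr a⟩
termination_by sizeOf s + sizeOf T
decreasing_by
  all_goals first
    | have := sizeOf_lt_pr ‹_ ∈ l›; omega
    | have := sizeOf_lt_pr ‹_ ∈ l'›; omega
    | have := sizeOf_lt_of_step_eq_some hsa; have := sizeOf_lt_of_step_eq_some hTa; omega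

theorem ResRel.unique {s T : Proc A} {r r' : RF A} (h : ResRel ω s T r) (h' : ResRel ω s T r') :
    r = r' := by
  induction h generalizing r' with
  | success _ _ hω =>
    cases h' with
    | success => rfl
    | probL _ _ _ hT _ => exact (hT hω).elim
    | sync _ _ _ hω' _ => exact (hω' hω).elim
  | probL l T r hT _ ih =>
    cases h' with
    | success _ _ hω => exact (hT hω).elim
    | probL _ _ r' _ h' => exact congrArg List.sum (List.map_congr_left fun x hx => by
        rw [ih x hx (h' x hx)])
  | probR l l' r _ ih =>
    cases h' with
    | probR _ _ r' h' => exact congrArg List.sum (List.map_congr_left fun y hy => by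
        rw [ih y hy (h' y hy)])
  | sync l l' r hω _ ih =>
    cases h' with
    | success _ _ hω' => exact (hω hω').elim
    | sync _ _ r' _ h' =>
      refine Finset.sum_congr rfl fun a ha => ?_
      obtain ⟨sa, hsa⟩ := exists_step_eq_some (s := nd l) (Finset.mem_inter.mp ha).1
      obtain ⟨Ta, hTa⟩ := exists_step_eq_some (s := nd l') (Finset.mem_inter.mp ha).2
      rw [ih a ha sa Ta hsa hTa (h' a ha sa Ta hsa hTa)]

/-- The paper's `Res(s, T)`. -/
noncomputable def res (ω : A) (s T : Proc A) : RF A :=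
  (ResRel.exists_res ω s T).choose

theorem resRel_res (ω : A) (s T : Proc A) : ResRel ω s T (res ω s T) :=
  (ResRel.exists_res ω s T).choose_spec

theorem resRel_iff {s T : Proc A} {r : RF A} : ResRel ω s T r ↔ r = res ω s T :=
  ⟨fun h => h.unique (resRel_res ω s T), fun h => h ▸ resRel_res ω s T⟩

noncomputable def resOpt (ω : A) : Option (Proc A) → Option (Proc A) → RF A
  | some s, some T => res ω s T
  | _, _ => 0

@[simp] theorem resOpt_none_right (ω : A) (o : Option (Proc A)) : resOpt ω o none = 0 := by
  cases o <;> rfl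

theorem res_of_mem {s : Proc A} {l' : List (A × Proc A)} (hω : ω ∈ l'.map Prod.fst) :
    res ω s (nd l') = 1 :=
  (resRel_iff.mp (.success s l' hω)).symm

theorem res_pr_of_not_hasOmega {l : List (ℝ × Proc A)} {T : Proc A} (hT : ¬ hasOmega ω T) :
    res ω (pr l) T = expect l (res ω · T) :=
  (resRel_iff.mp (.probL l T _ hT fun x _ => resRel_res ω x.2 T)).symm

theorem res_nd_pr (l : List (A × Proc A)) (l' : List (ℝ × Proc A)) :
    res ω (nd l) (pr l') = expect l' (res ω (nd l) ·) :=
  (resRel_iff.mp (.probR l l' _ fun y _ => resRel_res ω (nd l) y.2)).symm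

theorem res_nd_nd {l l' : List (A × Proc A)} (hω : ω ∉ l'.map Prod.fst) :
    res ω (nd l) (nd l') =
      syncRes ((nd l).menu ∩ (nd l').menu) (fun a => resOpt ω ((nd l).step a) ((nd l').step a)) :=
  (resRel_iff.mp (.sync l l' _ hω fun a _ sa Ta hsa hTa => by
    simpa [resOpt, hsa, hTa] using resRel_res ω sa Ta)).symm

theorem res_pr {l : List (ℝ × Proc A)} (hl : (l.map Prod.fst).sum = 1) (T : Proc A) :
    res ω (pr l) T = expect l (res ω · T) := by
  by_cases hT : hasOmega ω T
  · obtain ⟨l', rfl⟩ : ∃ l', T = nd l' := by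
      cases T with
      | nd l' => exact ⟨l', rfl⟩
      | pr l' => exact hT.elim
    simp only [res_of_mem hT, expect_const hl]
  · exact res_pr_of_not_hasOmega hT

theorem res_pr_right {s : Proc A} (hs : WF s) (l' : List (ℝ × Proc A)) :
    res ω s (pr l') = expect l' (res ω s ·) := by
  cases s with
  | nd l => exact res_nd_pr l l'
  | pr l =>
    have hbr : ∀ x ∈ l, res ω x.2 (pr l') = expect l' (res ω x.2 ·) := fun x hx => by
      obtain ⟨l₀, hl₀⟩ := (hs.of_mem_pr hx).2.1
      rw [hl₀, res_nd_pr]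
    rw [res_pr hs.sum_eq_one, expect_congr (g := fun p => expect l' (res ω p ·)) hbr, expect_comm]
    exact expect_congr fun y _ => (res_pr hs.sum_eq_one y.2).symm

theorem expect_flat_res {q : Proc A} (hq : WF q) (c : ℝ) (T : Proc A) :
    expect (flat c q) (res ω · T) = algebraMap ℝ (RF A) c * res ω q T := by
  cases q with
  | nd l => simp [flat]
  | pr l => exact (expect_scale l c _).trans (by rw [res_pr hq.sum_eq_one])

noncomputable def afterBranches (l : List (ℝ × Proc A)) (M : Finset A) (a : A) :
    List (ℝ × Proc A) :=
  (l.filter fun x => x.2.menu = M).flatMap fun x =>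
    match x.2.step a with
    | none => []
    | some q => flat (x.1 / ((l.filter fun x => x.2.menu = M).map Prod.fst).sum) q

theorem after_pr (l : List (ℝ × Proc A)) (M : Finset A) (a : A) :
    after (pr l) M a =
      if (afterBranches l M a).isEmpty then none else some (pr (afterBranches l M a)) :=
  rfl

theorem after_nd_menu (l : List (A × Proc A)) (a : A) : after (nd l) (nd l).menu a = (nd l).step a :=
  if_pos rfl

theorem afterBranches_eq_flatMap {l : List (ℝ × Proc A)} (hl : WF (pr l)) {M : Finset A} {a : A}
    (haM : a ∈ M) :
    ∃ q : ℝ × Proc A → Proc A,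
      (∀ x ∈ l.filter fun x => x.2.menu = M, x.2.step a = some (q x) ∧ WF (q x)) ∧
      afterBranches l M a =
        (l.filter fun x => x.2.menu = M).flatMap fun x => flat (x.1 / P1 (pr l) M) (q x) := by
  have hstep : ∀ x ∈ l.filter fun x => x.2.menu = M, ∃ q, x.2.step a = some q ∧ WF q := by
    intro x hx
    obtain ⟨hxl, hxM⟩ := List.mem_filter.mp hx
    obtain ⟨q, hq⟩ := exists_step_eq_some (of_decide_eq_true hxM ▸ haM)
    exact ⟨q, hq, (hl.of_mem_pr hxl).2.2.step hq⟩
  have : Nonempty (Proc A) := ⟨nd []⟩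
  choose! q hq using hstep
  refine ⟨q, hq, ?_⟩
  rw [afterBranches, ← P1_pr_eq_sum_filter hl]
  exact List.flatMap_congr fun x hx => by simp only [(hq x hx).1]

theorem sum_fst_afterBranches {l : List (ℝ × Proc A)} (hl : WF (pr l)) {M : Finset A} {a : A}
    (h0 : P1 (pr l) M ≠ 0) (haM : a ∈ M) : ((afterBranches l M a).map Prod.fst).sum = 1 := by
  obtain ⟨q, hq, hE⟩ := afterBranches_eq_flatMap hl haM
  simp only [hE, List.flatMap_def, List.map_flatten, List.sum_flatten, List.map_map,
    Function.comp_def]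
  rw [List.map_congr_left fun x hx => sum_fst_flat (hq x hx).2 _]
  simp only [div_eq_mul_inv]
  rw [List.sum_map_mul_right, ← P1_pr_eq_sum_filter hl, mul_inv_cancel₀ h0]

theorem WF.afterBranches {l : List (ℝ × Proc A)} (hl : WF (.pr l)) {M : Finset A} {a : A}
    (h0 : P1 (Proc.pr l) M ≠ 0) (haM : a ∈ M) : WF (Proc.pr (afterBranches l M a)) := by
  have hP := (P1_nonneg hl M).lt_of_ne' h0
  obtain ⟨q, hq, hE⟩ := afterBranches_eq_flatMap hl haM
  refine .pr_of_pos (fun e he => ?_) (sum_fst_afterBranches hl h0 haM)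
  rw [hE] at he
  obtain ⟨x, hx, he⟩ := List.mem_flatMap.mp he
  exact (hq x hx).2.of_mem_flat (div_pos (hl.of_mem_pr (List.mem_of_mem_filter hx)).1 hP) he

theorem after_pr_eq_some {l : List (ℝ × Proc A)} (hl : WF (.pr l)) {M : Finset A} {a : A}
    (h0 : P1 (Proc.pr l) M ≠ 0) (haM : a ∈ M) :
    after (Proc.pr l) M a = some (Proc.pr (afterBranches l M a)) := by
  rw [after_pr, if_neg]
  intro hnil
  have := sum_fst_afterBranches hl h0 haM
  rw [List.isEmpty_iff.mp hnil] at this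
  simp at this

theorem WF.exists_after {s : Proc A} (hs : WF s) {M : Finset A} {a : A} (h0 : P1 s M ≠ 0)
    (haM : a ∈ M) : ∃ s', after s M a = some s' ∧ WF s' := by
  cases s with
  | nd l =>
    obtain rfl : (Proc.nd l).menu = M := by
      by_contra hne
      exact h0 (by rw [P1_nd, if_neg hne])
    obtain ⟨q, hq⟩ := exists_step_eq_some haM
    exact ⟨q, (after_nd_menu l a).trans hq, hs.step hq⟩
  | pr l => exact ⟨_, after_pr_eq_some hs h0 haM, hs.afterBranches h0 haM⟩

/-- Conditioning on the menu `M` and then performing `a` rescales the branches offering `M`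
by `1 / P¹(M)`. -/
theorem P1_mul_resOpt_after {l : List (ℝ × Proc A)} (hl : WF (pr l)) {M : Finset A} {a : A}
    (haM : a ∈ M) (o : Option (Proc A)) :
    algebraMap ℝ (RF A) (P1 (pr l) M) * resOpt ω (after (pr l) M a) o =
      expect (l.filter fun x => x.2.menu = M) (fun p => resOpt ω (p.step a) o) := by
  cases o with
  | none => simp [expect]
  | some T =>
    by_cases h0 : P1 (pr l) M = 0
    · rw [h0, filter_eq_nil_of_P1_eq_zero hl h0]
      simp
    obtain ⟨q, hq, hE⟩ := afterBranches_eq_flatMap hl haM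
    rw [after_pr_eq_some hl h0 haM]
    change _ * res ω _ T = _
    rw [res_pr (sum_fst_afterBranches hl h0 haM), hE, expect_flatMap, ← List.sum_map_mul_left,
      expect]
    refine congrArg List.sum (List.map_congr_left fun x hx => ?_)
    rw [expect_flat_res (hq x hx).2, (hq x hx).1, ← mul_assoc, ← map_mul, mul_div_cancel₀ _ h0]
    rfl

def menus : Proc A → Finset (Finset A)
  | nd l => {(nd l).menu}
  | pr l => (l.map fun x => x.2.menu).toFinset

/-- Law of total probability over the menu offered by `s`. -/
theorem res_nd_eq_sum_menus {s : Proc A} (hs : WF s) {l' : List (A × Proc A)}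
    (hω : ω ∉ l'.map Prod.fst) {Ms : Finset (Finset A)} (hMs : s.menus ⊆ Ms) :
    res ω s (nd l') = ∑ M ∈ Ms, algebraMap ℝ (RF A) (P1 s M) *
      syncRes (M ∩ (nd l').menu) (fun a => resOpt ω (after s M a) ((nd l').step a)) := by
  cases s with
  | nd l =>
    have hmenu : (nd l).menu ∈ Ms := hMs (by simp [menus])
    simp only [P1_nd, apply_ite (algebraMap ℝ (RF A)), map_one, map_zero, ite_mul, one_mul,
      zero_mul, Finset.sum_ite_eq, if_pos hmenu, after_nd_menu]
    exact res_nd_nd hω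
  | pr l =>
    calc res ω (pr l) (nd l')
      _ = expect l fun p =>
            syncRes (p.menu ∩ (nd l').menu) fun a => resOpt ω (p.step a) ((nd l').step a) := by
        rw [res_pr_of_not_hasOmega (T := nd l') hω]
        refine expect_congr fun x hx => ?_
        obtain ⟨l₀, hl₀⟩ := (hs.of_mem_pr hx).2.1
        rw [hl₀, res_nd_nd hω]
      _ = ∑ M ∈ Ms, expect (l.filter fun x => x.2.menu = M) fun p =>
            syncRes (M ∩ (nd l').menu) fun a => resOpt ω (p.step a) ((nd l').step a) := by
        rw [expect_eq_sum_filter (m := menu) fun x hx =>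
          hMs (List.mem_toFinset.mpr (List.mem_map_of_mem (f := fun x => x.2.menu) hx))]
        refine Finset.sum_congr rfl fun M _ => expect_congr fun x hx => ?_
        rw [of_decide_eq_true (List.mem_filter.mp hx).2]
      _ = _ := Finset.sum_congr rfl fun M _ => by
        rw [expect_syncRes, mul_syncRes]
        exact syncRes_congr fun a ha => (P1_mul_resOpt_after hs (Finset.mem_inter.mp ha).1 _).symm

theorem res_eq_of_rtEquiv {T : Proc A} (hT : WF T) {s t : Proc A} (hs : WF s) (ht : WF t)
    (hst : RTEquiv s t) : res ω s T = res ω t T := by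
  match T, hT with
  | pr l', hT =>
    rw [res_pr_right hs, res_pr_right ht]
    exact expect_congr fun y hy => res_eq_of_rtEquiv (hT.of_mem_pr hy).2.2 hs ht hst
  | nd l', hT =>
    by_cases hω : ω ∈ l'.map Prod.fst
    · rw [res_of_mem hω, res_of_mem hω]
    rw [res_nd_eq_sum_menus hs hω Finset.subset_union_left,
      res_nd_eq_sum_menus ht hω Finset.subset_union_right]
    refine Finset.sum_congr rfl fun M _ => ?_
    rw [← hst.P1_eq M]
    by_cases h0 : P1 s M = 0
    · simp [h0]
    refine congrArg _ (syncRes_congr fun a ha => ?_)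
    have haM := (Finset.mem_inter.mp ha).1
    obtain ⟨s', hs'a, hs'⟩ := hs.exists_after h0 haM
    obtain ⟨t', ht'a, ht'⟩ := ht.exists_after (hst.P1_eq M ▸ h0) haM
    rw [hs'a, ht'a]
    cases hTa : (nd l').step a with
    | none => simp
    | some Ta =>
      exact res_eq_of_rtEquiv (hT.step hTa) hs' ht'
        (hst.after ((P1_nonneg hs M).lt_of_ne' h0) hs'a ht'a)
termination_by sizeOf T
decreasing_by
  · exact sizeOf_lt_pr hy
  · exact sizeOf_lt_of_step_eq_some hTa

end Proc

theorem rtEquiv_implies_testEquiv_general {A : Type} [DecidableEq A] (ω : A)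
    (s t : Proc A) (hs : Proc.WF s) (ht : Proc.WF t)
    (h : Proc.RTEquiv s t) :
    Proc.TestEquiv ω s t := by
  intro T hT r
  rw [Proc.resRel_iff, Proc.resRel_iff, Proc.res_eq_of_rtEquiv hT hs ht h]

/-- If two processes are probabilistically ready trace equivalent, then they
are testing equivalent: `Res(s,T) = Res(t,T)` for every test `T`. -/
theorem rtEquiv_implies_testEquiv {A : Type} [DecidableEq A] (ω : A)
    (s t : Proc A) (hs : Proc.WF s) (ht : Proc.WF t)
    (hsω : Proc.NoOmega ω s) (htω : Proc.NoOmega ω t)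
    (h : Proc.RTEquiv s t) :
    Proc.TestEquiv ω s t :=
  rtEquiv_implies_testEquiv_general ω s t hs ht h
end
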